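/- arXiv:2306.01724 — 4 statements merged into one kernel-verified Lean document; each statement's English description precedes it below -/
import Mathlib

section
/- Let k be a positive integer, α ∈ [2/3, 1), G a graph and S ⊆ V(G) a (k,α)-well-linked set. Then there exists an S-free set F ⊆ V(G) of size k−1. -/
open SimpleGraph

/-- `H` is a minor of `G`: branch sets are nonempty, connected, pairwise disjoint,
and every edge of `H` is realized by an edge of `G` between the branch sets. -/
def IsMinor {V W : Type*} (H : SimpleGraph V) (G : SimpleGraph W) : Prop :=
  ∃ S : V → Set W,
    (∀ a, (G.induce (S a)).Connected) ∧
    (∀ a b, a ≠ b → Disjoint (S a) (S b)) ∧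
    (∀ a b, H.Adj a b → ∃ x ∈ S a, ∃ y ∈ S b, G.Adj x y)

/-- `H` is an `X`-minor of `G`: additionally every branch set meets `X`. -/
def IsMinorOn {V W : Type*} (H : SimpleGraph V) (G : SimpleGraph W) (X : Set W) : Prop :=
  ∃ S : V → Set W,
    (∀ a, (G.induce (S a)).Connected) ∧
    (∀ a, (S a ∩ X).Nonempty) ∧
    (∀ a b, a ≠ b → Disjoint (S a) (S b)) ∧
    (∀ a b, H.Adj a b → ∃ x ∈ S a, ∃ y ∈ S b, G.Adj x y)

/-- The `(k × k)`-grid graph. -/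
def gridGraph (k : ℕ) : SimpleGraph (Fin k × Fin k) :=
  SimpleGraph.fromRel fun p q =>
    (p.1 = q.1 ∧ (p.2 : ℕ) + 1 = (q.2 : ℕ)) ∨ (p.2 = q.2 ∧ (p.1 : ℕ) + 1 = (q.1 : ℕ))

/-- `bg(G, X)`: the largest `k` such that the `(k × k)`-grid is an `X`-minor of `G`. -/
noncomputable def bgAnn {V : Type*} (G : SimpleGraph V) (X : Set V) : ℕ :=
  sSup {k | IsMinorOn (gridGraph k) G X}

/-- The Hadwiger number: the largest `t` with `K_t` a minor of `G`. -/
noncomputable def hw {V : Type*} (G : SimpleGraph V) : ℕ :=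
  sSup {t | IsMinor (⊤ : SimpleGraph (Fin t)) G}

/-- The adjacency relation of the mixed surface grid of order `k` with `b` blocks,
crosscap positions `Ic` and handle positions `Ih`. -/
def msgRel (k b : ℕ) (Ic Ih : Finset ℕ) (p q : Fin k × ZMod (4 * b * k)) : Prop :=
  (p.1 = q.1 ∧ q.2 = p.2 + 1) ∨
  (p.2 = q.2 ∧ (p.1 : ℕ) + 1 = (q.1 : ℕ)) ∨
  ((p.1 : ℕ) = 0 ∧ (q.1 : ℕ) = 0 ∧
    ((∃ i ∈ Ic, ∃ j ∈ Finset.Icc 1 (2 * k),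
        p.2 = ((4 * k * (i - 1) + j : ℕ) : ZMod (4 * b * k)) ∧
        q.2 = ((4 * k * (i - 1) + 2 * k + j : ℕ) : ZMod (4 * b * k))) ∨
     (∃ i ∈ Ih, ∃ j ∈ Finset.Icc 1 k,
        ((p.2 = ((4 * k * (i - 1) + j : ℕ) : ZMod (4 * b * k)) ∧
          q.2 = ((4 * k * (i - 1) + 3 * k - j + 1 : ℕ) : ZMod (4 * b * k))) ∨
         (p.2 = ((4 * k * (i - 1) + k + j : ℕ) : ZMod (4 * b * k)) ∧
          q.2 = ((4 * k * (i - 1) + 4 * k + j - 1 : ℕ) : ZMod (4 * b * k)))))))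

/-- The mixed surface grid of order `k` with `b` blocks, crosscaps at the positions of `Ic`
and handles at the positions of `Ih`. -/
def mixedSurfaceGrid (k b : ℕ) (Ic Ih : Finset ℕ) : SimpleGraph (Fin k × ZMod (4 * b * k)) :=
  SimpleGraph.fromRel (msgRel k b Ic Ih)

/-- The Dyck-grid `D_k^{(h,c)}`. -/
def dyckGrid (k h c : ℕ) : SimpleGraph (Fin k × ZMod (4 * (h + c + 1) * k)) :=
  mixedSurfaceGrid k (h + c + 1) (Finset.Icc (h + 2) (h + c + 1)) (Finset.Icc 2 (h + 1))

/-- The reduced Dyck-grid `D̃_k^{(h,c)}` (no plain annulus block). -/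
def reducedDyckGrid (k h c : ℕ) : SimpleGraph (Fin k × ZMod (4 * (h + c) * k)) :=
  mixedSurfaceGrid k (h + c) (Finset.Icc (h + 1) (h + c)) (Finset.Icc 1 h)

/-- `(A, B)` is a separation of `G`. -/
def IsSep {V : Type*} (G : SimpleGraph V) (A B : Set V) : Prop :=
  A ∪ B = Set.univ ∧ ∀ u v, G.Adj u v → u ∈ A \ B → v ∉ B \ A

/-- `Z` is an `α`-balanced separator for `S` in `G`. -/
def IsBalSep {V : Type*} (G : SimpleGraph V) (α : ℝ) (S Z : Set V) : Prop :=
  ∀ C : (G.induce Zᶜ).ConnectedComponent,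
    ((((Subtype.val '' C.supp) ∩ S).ncard : ℝ)) ≤ α * (S.ncard : ℝ)

/-- `S` is `(q, α)`-well-linked in `G`. -/
def WellLinked {V : Type*} (G : SimpleGraph V) (q : ℕ) (α : ℝ) (S : Set V) : Prop :=
  ∀ Z : Set V, Z.ncard ≤ q → ¬ IsBalSep G α S Z

/-- `T` is a tangle of order `k` in `G`. -/
def IsTangle {V : Type*} (G : SimpleGraph V) (k : ℕ) (T : Set (Set V × Set V)) : Prop :=
  (∀ p ∈ T, IsSep G p.1 p.2 ∧ (p.1 ∩ p.2).ncard < k) ∧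
  (∀ A B : Set V, IsSep G A B → (A ∩ B).ncard < k →
      (((A, B) ∈ T ∧ (B, A) ∉ T) ∨ ((B, A) ∈ T ∧ (A, B) ∉ T))) ∧
  (∀ p q r, p ∈ T → q ∈ T → r ∈ T → p.1 ∪ q.1 ∪ r.1 ≠ Set.univ)

/-- The tangle `𝒯_S` induced by a `(q, α)`-well-linked set `S`. -/
def wlTangle {V : Type*} (G : SimpleGraph V) (q : ℕ) (α : ℝ) (S : Set V) :
    Set (Set V × Set V) :=
  {p | IsSep G p.1 p.2 ∧ (p.1 ∩ p.2).ncard ≤ q ∧ α * (S.ncard : ℝ) < ((S ∩ p.2).ncard : ℝ)}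

/-- `F` is `S`-free in `G`. -/
def SFree {V : Type*} (G : SimpleGraph V) (α : ℝ) (S F : Set V) : Prop :=
  ∀ A B : Set V, IsSep G A B → (A ∩ B).ncard < F.ncard →
    (F ⊆ A → α * (S.ncard : ℝ) < ((A ∩ S).ncard : ℝ)) ∧
    (F ⊆ B → α * (S.ncard : ℝ) < ((B ∩ S).ncard : ℝ))

/-- `S` is strongly linked in `G`. -/
def StronglyLinked {V : Type*} (G : SimpleGraph V) (S : Set V) : Prop :=
  ∀ S₁ S₂ : Set V, S₁ ∪ S₂ = S → Disjoint S₁ S₂ → S₁.Nonempty → S₂.Nonempty →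
    ∀ A₁ A₂ : Set V, IsSep G A₁ A₂ → S₁ ⊆ A₁ → S₂ ⊆ A₂ →
      min S₁.ncard S₂.ncard ≤ (A₁ ∩ A₂).ncard

/-- The `(k × 2k)`-grid with the appropriate vertical edges removed (before deleting
degree-one vertices). -/
def wallPre (k : ℕ) : SimpleGraph (Fin k × Fin (2 * k)) :=
  SimpleGraph.fromRel fun p q =>
    (p.1 = q.1 ∧ (p.2 : ℕ) + 1 = (q.2 : ℕ)) ∨
    (p.2 = q.2 ∧ (p.1 : ℕ) + 1 = (q.1 : ℕ) ∧ ((p.1 : ℕ) + (p.2 : ℕ)) % 2 = 1)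

/-- The vertices of the elementary `k`-wall: vertices of `wallPre` of degree at least two. -/
def wallVerts (k : ℕ) : Set (Fin k × Fin (2 * k)) :=
  {v | ∃ a b, a ≠ b ∧ (wallPre k).Adj v a ∧ (wallPre k).Adj v b}

/-- The elementary `k`-wall. -/
def elemWall (k : ℕ) : SimpleGraph (wallVerts k) :=
  (wallPre k).induce (wallVerts k)

/-- `(f, p)` is a subdivision of `H` embedded as a subgraph of `G`. -/
def IsSubdivEmbed {V W : Type*} (H : SimpleGraph V) (G : SimpleGraph W)
    (f : V → W) (p : ∀ u v, H.Adj u v → G.Walk (f u) (f v)) : Prop :=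
  Function.Injective f ∧
  (∀ u v (h : H.Adj u v), (p u v h).IsPath) ∧
  (∀ u v (h : H.Adj u v), (p u v h).support = (p v u h.symm).support) ∧
  (∀ u v (h : H.Adj u v), ∀ w ∈ (p u v h).support, w ∈ Set.range f → w = f u ∨ w = f v) ∧
  (∀ u v u' v' (h : H.Adj u v) (h' : H.Adj u' v'), s(u, v) ≠ s(u', v') →
    ∀ w : W, w ∈ (p u v h).support → w ∈ (p u' v' h').support →
      ((w = f u ∨ w = f v) ∧ (w = f u' ∨ w = f v')))

/-- The vertex set in `G` of the `i`-th row of an embedded `k`-wall. -/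
def wallRowSet {V : Type*} {G : SimpleGraph V} (k : ℕ)
    (f : wallVerts k → V) (p : ∀ u v, (elemWall k).Adj u v → G.Walk (f u) (f v))
    (i : Fin k) : Set V :=
  (f '' {v | v.val.1 = i}) ∪
  {w | ∃ u v, ∃ h : (elemWall k).Adj u v,
      u.val.1 = i ∧ v.val.1 = i ∧ w ∈ (p u v h).support}

/-- The vertex set in `G` of the `j`-th column of an embedded `k`-wall. -/
def wallColSet {V : Type*} {G : SimpleGraph V} (k : ℕ)
    (f : wallVerts k → V) (p : ∀ u v, (elemWall k).Adj u v → G.Walk (f u) (f v))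
    (j : Fin k) : Set V :=
  (f '' {v | (v.val.2 : ℕ) / 2 = (j : ℕ)}) ∪
  {w | ∃ u v, ∃ h : (elemWall k).Adj u v,
      (u.val.2 : ℕ) / 2 = (j : ℕ) ∧ (v.val.2 : ℕ) / 2 = (j : ℕ) ∧ w ∈ (p u v h).support}

/-- The tangle `𝒯_W` induced by an embedded `k`-wall. -/
def wallTangle {V : Type*} (G : SimpleGraph V) (k : ℕ)
    (f : wallVerts k → V) (p : ∀ u v, (elemWall k).Adj u v → G.Walk (f u) (f v)) :
    Set (Set V × Set V) :=
  {AB | IsSep G AB.1 AB.2 ∧ (AB.1 ∩ AB.2).ncard < k ∧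
    ∃ i j : Fin k, wallRowSet k f p i ⊆ AB.2 \ AB.1 ∧ wallColSet k f p j ⊆ AB.2 \ AB.1}

/-- All vertices of `G` used by an embedded `k`-wall. -/
def wallSupport {V : Type*} {G : SimpleGraph V} (k : ℕ)
    (f : wallVerts k → V) (p : ∀ u v, (elemWall k).Adj u v → G.Walk (f u) (f v)) : Set V :=
  Set.range f ∪ {w | ∃ u v, ∃ h : (elemWall k).Adj u v, w ∈ (p u v h).support}

/-- `(T, β)` is a tree-decomposition of `G`. -/
def IsTreeDecomp {V : Type*} {ι : Type*} (G : SimpleGraph V) (T : SimpleGraph ι)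
    (β : ι → Set V) : Prop :=
  T.IsTree ∧
  (∀ v : V, ∃ t, v ∈ β t) ∧
  (∀ u v, G.Adj u v → ∃ t, u ∈ β t ∧ v ∈ β t) ∧
  (∀ v : V, (T.induce {t | v ∈ β t}).Connected)

/-- The torso of a tree-decomposition `(T, β)` of `G` at a node `t`. -/
def torso {V : Type*} {ι : Type*} (G : SimpleGraph V) (T : SimpleGraph ι)
    (β : ι → Set V) (t : ι) : SimpleGraph (β t) :=
  SimpleGraph.fromRel fun u v =>
    G.Adj u v ∨ ∃ t', T.Adj t t' ∧ (u : V) ∈ β t' ∧ (v : V) ∈ β t'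

/-- The graph `G^c` on `V(G)` with edge set `E(G) ∪ E(G_t)`. -/
def withTorsoEdges {V : Type*} {ι : Type*} (G : SimpleGraph V) (T : SimpleGraph ι)
    (β : ι → Set V) (t : ι) : SimpleGraph V :=
  SimpleGraph.fromRel fun u v =>
    G.Adj u v ∨ ∃ (hu : u ∈ β t) (hv : v ∈ β t), (torso G T β t).Adj ⟨u, hu⟩ ⟨v, hv⟩

/-- Interior vertices of the `(t+2) × (t+2)`-grid. -/
def gridInterior (t : ℕ) (p : Fin (t + 2) × Fin (t + 2)) : Prop :=
  0 < (p.1 : ℕ) ∧ (p.1 : ℕ) < t + 1 ∧ 0 < (p.2 : ℕ) ∧ (p.2 : ℕ) < t + 1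

/-- The `(t+2) × (t+2)`-grid with all edges whose two endpoints have degree
less than four removed. -/
def crossedPre (t : ℕ) : SimpleGraph (Fin (t + 2) × Fin (t + 2)) :=
  SimpleGraph.fromRel fun a b =>
    ((a.1 = b.1 ∧ (a.2 : ℕ) + 1 = (b.2 : ℕ)) ∨ (a.2 = b.2 ∧ (a.1 : ℕ) + 1 = (b.1 : ℕ))) ∧
    (gridInterior t a ∨ gridInterior t b)

/-- The line graph of `K`. -/
def lineGraph' {W : Type*} (K : SimpleGraph W) : SimpleGraph K.edgeSet :=
  SimpleGraph.fromRel fun e f => ∃ x, x ∈ (e : Sym2 W) ∧ x ∈ (f : Sym2 W)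

/-- `G` contains a crossed `t`-grid as a subgraph. -/
def ContainsCrossedGrid {V : Type*} (t : ℕ) (G : SimpleGraph V) : Prop :=
  ∃ (n : ℕ) (K : SimpleGraph (Fin n))
    (f : Fin (t + 2) × Fin (t + 2) → Fin n)
    (p : ∀ u v, (crossedPre t).Adj u v → K.Walk (f u) (f v)),
    IsSubdivEmbed (crossedPre t) K f p ∧
    (∀ w : Fin n, ∃ u v h, w ∈ (p u v h).support) ∧
    (∀ e ∈ K.edgeSet, ∃ u v h, e ∈ (p u v h).edges) ∧
    (∀ u v (h : (crossedPre t).Adj u v), 2 ≤ (p u v h).length) ∧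
    ∃ φ : K.edgeSet → V, Function.Injective φ ∧
      ∀ e e', (lineGraph' K).Adj e e' → G.Adj (φ e) (φ e')

/-- The satellite-augmented reduced Dyck-grid `D̂_k^{(h,c)}`. -/
def hatRel (k h c : ℕ)
    (a b : (Fin k × ZMod (4 * (h + c) * k)) ⊕ (Fin (h + c) × Fin k)) : Prop :=
  (∃ p q, a = Sum.inl p ∧ b = Sum.inl q ∧
     msgRel k (h + c) (Finset.Icc (h + 1) (h + c)) (Finset.Icc 1 h) p q) ∨
  (∃ s p, a = Sum.inr s ∧ b = Sum.inl p ∧ (p.1 : ℕ) = 0 ∧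
     ∃ j ∈ Finset.Icc 1 4,
       p.2 = ((4 * k * (s.1 : ℕ) + 4 * (s.2 : ℕ) + j : ℕ) : ZMod (4 * (h + c) * k)))

def hatDyckGrid (k h c : ℕ) :
    SimpleGraph ((Fin k × ZMod (4 * (h + c) * k)) ⊕ (Fin (h + c) × Fin k)) :=
  SimpleGraph.fromRel (hatRel k h c)

/-! Call a vertex set heavy if it contains more than `α|S|` vertices of `S`. Among the separations
`(A, B)` of order at most `k - 2` with `A` not heavy, such as `(∅, V)`, choose one with `A`
inclusion-maximal. Well-linkedness makes `B` heavy, hence larger than `k`, so `A ∩ B` can be padded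
inside `B` to a set `F` of size `k - 1` with `F ⊈ A`. If a separation `(C, D)` of order at most
`k - 2` had `F ⊆ C` with `C` not heavy, a heavy component of `G - (C ∩ D)` would lie in `B ∩ D`,
and the corner separation `(A ∪ C, B ∩ D)` would contradict the maximality of `A`. -/

lemma SimpleGraph.ConnectedComponent.disjoint_image_val_supp {V : Type*} {G : SimpleGraph V}
    {Z : Set V} (K : (G.induce Zᶜ).ConnectedComponent) : Disjoint (Subtype.val '' K.supp) Z :=
  Set.subset_compl_iff_disjoint_right.1 (Subtype.coe_image_subset _ _)

namespace IsSep

variable {V : Type*} {G : SimpleGraph V} {A B C D : Set V}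

lemma empty_univ : IsSep G ∅ Set.univ :=
  ⟨Set.empty_union _, fun _ _ _ hu _ => hu.1⟩

lemma symm (h : IsSep G A B) : IsSep G B A :=
  ⟨Set.union_comm A B ▸ h.1, fun u v huv hu hv => h.2 v u huv.symm hv hu⟩

lemma union_inter (hAB : IsSep G A B) (hCD : IsSep G C D) : IsSep G (A ∪ C) (B ∩ D) := by
  have hAB' := Set.eq_univ_iff_forall.1 hAB.1
  have hCD' := Set.eq_univ_iff_forall.1 hCD.1
  refine ⟨Set.eq_univ_iff_forall.2 fun v => ?_, fun u v huv hu hv => ?_⟩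
  · have := hAB' v
    have := hCD' v
    simp only [Set.mem_union, Set.mem_inter_iff] at *
    tauto
  · have := hAB' u
    have := hCD' u
    have := hAB.2 u v huv
    have := hCD.2 u v huv
    simp only [Set.mem_sdiff, Set.mem_union, Set.mem_inter_iff] at *
    tauto

lemma mem_sdiff_of_adj (h : IsSep G A B) {u v : V} (huv : G.Adj u v) (hu : u ∈ A \ B)
    (hv : v ∉ A ∩ B) : v ∈ A \ B := by
  have := Set.eq_univ_iff_forall.1 h.1 v
  have := h.2 u v huv hu
  simp only [Set.mem_sdiff, Set.mem_union, Set.mem_inter_iff] at *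
  tauto

variable {Z : Set V}

lemma image_supp_subset_sdiff (h : IsSep G A B) {K : (G.induce Zᶜ).ConnectedComponent}
    (hK : Disjoint (Subtype.val '' K.supp) (A ∩ B)) {u : ↥Zᶜ} (hu : u ∈ K.supp)
    (huA : ↑u ∈ A \ B) : Subtype.val '' K.supp ⊆ A \ B := by
  rintro _ ⟨v, hv, rfl⟩
  obtain ⟨w⟩ := ConnectedComponent.exact (hu.trans hv.symm)
  induction w with
  | nil => exact huA
  | cons huv w ih =>
    have hx : _ ∈ K.supp := (ConnectedComponent.connectedComponentMk_eq_of_adj huv).symm.trans hu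
    exact ih hx (h.mem_sdiff_of_adj huv huA (Set.disjoint_left.1 hK ⟨_, hx, rfl⟩)) hv

lemma image_supp_subset_or (h : IsSep G A B) (K : (G.induce Zᶜ).ConnectedComponent)
    (hK : Disjoint (Subtype.val '' K.supp) (A ∩ B)) :
    Subtype.val '' K.supp ⊆ A \ B ∨ Subtype.val '' K.supp ⊆ B \ A := by
  by_cases hA : ∃ u ∈ K.supp, ↑u ∈ A \ B
  · obtain ⟨u, hu, huA⟩ := hA
    exact .inl (h.image_supp_subset_sdiff hK hu huA)
  · refine .inr ?_
    rintro _ ⟨v, hv, rfl⟩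
    have := Set.eq_univ_iff_forall.1 h.1 v
    have := Set.disjoint_left.1 hK ⟨v, hv, rfl⟩
    have := fun hvA => hA ⟨v, hv, hvA⟩
    simp only [Set.mem_sdiff, Set.mem_union, Set.mem_inter_iff] at *
    tauto

end IsSep

def IsHeavy {V : Type*} (α : ℝ) (S T : Set V) : Prop :=
  α * S.ncard < (T ∩ S).ncard

lemma IsHeavy.mono {V : Type*} [Finite V] {α : ℝ} {S K T : Set V} (h : IsHeavy α S K)
    (hKT : K ⊆ T) : IsHeavy α S T :=
  h.trans_le (by exact_mod_cast Set.ncard_le_ncard (Set.inter_subset_inter_left S hKT))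

lemma not_isHeavy_empty {V : Type*} {α : ℝ} {S : Set V} (hα : 0 ≤ α) : ¬IsHeavy α S ∅ := by
  simp only [IsHeavy, Set.empty_inter, Set.ncard_empty, Nat.cast_zero, not_lt]
  positivity

namespace WellLinked

variable {V : Type*} {G : SimpleGraph V} {k : ℕ} {α : ℝ} {S A B : Set V}

lemma exists_isHeavy_component (hS : WellLinked G k α S) {Z : Set V} (hZ : Z.ncard ≤ k) :
    ∃ K : (G.induce Zᶜ).ConnectedComponent, IsHeavy α S (Subtype.val '' K.supp) := by
  simpa [IsBalSep, IsHeavy] using hS Z hZ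

lemma isHeavy_or_isHeavy [Finite V] (hS : WellLinked G k α S) (hAB : IsSep G A B)
    (hord : (A ∩ B).ncard ≤ k) : IsHeavy α S A ∨ IsHeavy α S B := by
  obtain ⟨K, hK⟩ := hS.exists_isHeavy_component hord
  exact (hAB.image_supp_subset_or K K.disjoint_image_val_supp).imp
    (fun h => hK.mono (h.trans Set.sdiff_subset)) (fun h => hK.mono (h.trans Set.sdiff_subset))

/-- Removing `min k |S|` vertices of `S` leaves a component with more than `α|S|` vertices of
`S`. -/
lemma natCast_lt_one_sub_mul_ncard [Finite V] (hα : 0 ≤ α) (hS : WellLinked G k α S) :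
    (k : ℝ) < (1 - α) * S.ncard := by
  obtain ⟨Z, hZS, hZ⟩ := Set.exists_subset_card_eq (min_le_right k S.ncard)
  obtain ⟨K, hK⟩ := hS.exists_isHeavy_component (hZ.trans_le (min_le_left _ _))
  have hKZ : Disjoint (Subtype.val '' K.supp ∩ S) Z :=
    K.disjoint_image_val_supp.mono_left Set.inter_subset_left
  have hcard : (Subtype.val '' K.supp ∩ S).ncard + Z.ncard ≤ S.ncard := by
    rw [← Set.ncard_union_eq hKZ]
    exact Set.ncard_le_ncard (Set.union_subset Set.inter_subset_right hZS)
  have hcard' : ((Subtype.val '' K.supp ∩ S).ncard : ℝ) + Z.ncard ≤ S.ncard := by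
    exact_mod_cast hcard
  unfold IsHeavy at hK
  rcases le_total k S.ncard with hkS | hSk
  · rw [hZ, min_eq_left hkS] at hcard'
    linarith
  · rw [hZ, min_eq_right hSk] at hcard'
    nlinarith [(Nat.cast_nonneg S.ncard : (0 : ℝ) ≤ _)]

lemma lt_ncard_of_isHeavy [Finite V] (hα : 1 / 2 ≤ α) (hS : WellLinked G k α S) {T : Set V}
    (hT : IsHeavy α S T) : k < T.ncard := by
  have hk := hS.natCast_lt_one_sub_mul_ncard (by linarith)
  have hTS : ((T ∩ S).ncard : ℝ) ≤ T.ncard := by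
    exact_mod_cast Set.ncard_le_ncard Set.inter_subset_left
  unfold IsHeavy at hT
  have : (k : ℝ) < T.ncard := by nlinarith [(Nat.cast_nonneg S.ncard : (0 : ℝ) ≤ _)]
  exact_mod_cast this

/-- Two sides both holding more than `α|S| ≥ 2|S|/3` vertices of `S` would need a separator
with more than `|S|/3 > k` vertices of `S`. -/
lemma not_isHeavy_of_isHeavy [Finite V] (hα : 2 / 3 ≤ α) (hS : WellLinked G k α S)
    (hAB : IsSep G A B) (hord : (A ∩ B).ncard ≤ k) (hB : IsHeavy α S B) : ¬IsHeavy α S A := by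
  intro hA
  have hk := hS.natCast_lt_one_sub_mul_ncard (by linarith)
  have hsum : S.ncard + (A ∩ B ∩ S).ncard = (A ∩ S).ncard + (B ∩ S).ncard := by
    have hunion : (A ∩ S) ∪ (B ∩ S) = S := by
      rw [← Set.union_inter_distrib_right, hAB.1, Set.univ_inter]
    have := Set.ncard_union_add_ncard_inter (A ∩ S) (B ∩ S)
    rwa [hunion, ← Set.inter_inter_distrib_right] at this
  have hABS : ((A ∩ B ∩ S).ncard : ℝ) ≤ k := by
    exact_mod_cast (Set.ncard_le_ncard Set.inter_subset_left).trans hord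
  have hsum' : (S.ncard : ℝ) + (A ∩ B ∩ S).ncard = (A ∩ S).ncard + (B ∩ S).ncard := by
    exact_mod_cast hsum
  unfold IsHeavy at hA hB
  nlinarith [(Nat.cast_nonneg S.ncard : (0 : ℝ) ≤ _)]

variable {C D F : Set V}

lemma isHeavy_of_maximal [Finite V] (hα : 2 / 3 ≤ α) (hS : WellLinked G k α S)
    (hAB : IsSep G A B) (hA : ¬IsHeavy α S A)
    (hmax : ∀ C D, IsSep G C D → (C ∩ D).ncard + 2 ≤ k → ¬IsHeavy α S C → A ⊆ C → C ⊆ A)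
    (hABF : A ∩ B ⊆ F) (hFA : ¬F ⊆ A) (hCD : IsSep G C D) (hord : (C ∩ D).ncard + 2 ≤ k)
    (hFC : F ⊆ C) : IsHeavy α S C := by
  by_contra hC
  obtain ⟨K, hK⟩ := hS.exists_isHeavy_component (Z := C ∩ D) (by omega)
  have hKD : Subtype.val '' K.supp ⊆ D \ C :=
    (hCD.image_supp_subset_or K K.disjoint_image_val_supp).resolve_left
      fun h => hC (hK.mono (h.trans Set.sdiff_subset))
  have hKB : Subtype.val '' K.supp ⊆ B \ A :=
    (hAB.image_supp_subset_or K (Set.disjoint_of_subset hKD (hABF.trans hFC)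
      Set.disjoint_sdiff_left)).resolve_left fun h => hA (hK.mono (h.trans Set.sdiff_subset))
  have hBD : IsHeavy α S (B ∩ D) :=
    hK.mono (Set.subset_inter (hKB.trans Set.sdiff_subset) (hKD.trans Set.sdiff_subset))
  have hcorner : ((A ∪ C) ∩ (B ∩ D)).ncard ≤ (C ∩ D).ncard := by
    refine Set.ncard_le_ncard ?_
    rintro x ⟨hxA | hxC, hxB, hxD⟩
    · exact ⟨hFC (hABF ⟨hxA, hxB⟩), hxD⟩
    · exact ⟨hxC, hxD⟩
  have hAC : ¬IsHeavy α S (A ∪ C) :=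
    hS.not_isHeavy_of_isHeavy hα (hAB.union_inter hCD) (by omega) hBD
  exact hFA (hFC.trans (Set.subset_union_right.trans
    (hmax _ _ (hAB.union_inter hCD) (by omega) hAC Set.subset_union_left)))

end WellLinked

theorem exists_free_set_general
    (V : Type) [Finite V] (G : SimpleGraph V) (k : ℕ)
    (α : ℝ) (hα1 : 2 / 3 ≤ α) (S : Set V)
    (hS : WellLinked G k α S) :
    ∃ F : Set V, F.ncard = k - 1 ∧ SFree G α S F := by
  obtain hk | hk := le_or_gt k 1
  · exact ⟨∅, by simp; omega, fun A B _ h => absurd h (by simp)⟩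
  obtain ⟨⟨A, B⟩, hAB, hmax⟩ := Set.Finite.exists_maximalFor Prod.fst
    {p : Set V × Set V | IsSep G p.1 p.2 ∧ (p.1 ∩ p.2).ncard + 2 ≤ k ∧ ¬IsHeavy α S p.1}
    (Set.toFinite _)
    ⟨(∅, Set.univ), IsSep.empty_univ, by simp; omega, not_isHeavy_empty (by linarith)⟩
  obtain ⟨hAB, hord, hA⟩ : IsSep G A B ∧ (A ∩ B).ncard + 2 ≤ k ∧ ¬IsHeavy α S A := hAB
  have hB : IsHeavy α S B := (hS.isHeavy_or_isHeavy hAB (by omega)).resolve_left hA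
  have hBk := hS.lt_ncard_of_isHeavy (by linarith) hB
  obtain ⟨F, hABF, hFB, hF⟩ :=
    Set.exists_subsuperset_card_eq Set.inter_subset_right (by omega : (A ∩ B).ncard ≤ k - 1)
      (by omega)
  have hFA : ¬F ⊆ A := fun h => by
    have := Set.ncard_le_ncard (Set.subset_inter h hFB)
    omega
  have hmax' := fun C D hCD hCDk hC (hAC : A ⊆ C) => hmax (j := (C, D)) ⟨hCD, hCDk, hC⟩ hAC
  refine ⟨F, hF, fun C D hCD hCDk => ⟨fun hFC => ?_, fun hFD => ?_⟩⟩
  · exact hS.isHeavy_of_maximal hα1 hAB hA hmax' hABF hFA hCD (by omega) hFC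
  · exact hS.isHeavy_of_maximal hα1 hAB hA hmax' hABF hFA hCD.symm
      (by rw [Set.inter_comm]; omega) hFD

/-- Lemma 3.5: every `(k, α)`-well-linked set admits an `S`-free set of
size `k - 1`. -/
theorem exists_free_set
    (V : Type) [Finite V] (G : SimpleGraph V) (k : ℕ) (hk : 1 ≤ k)
    (α : ℝ) (hα1 : 2 / 3 ≤ α) (hα2 : α < 1) (S : Set V)
    (hS : WellLinked G k α S) :
    ∃ F : Set V, F.ncard = k - 1 ∧ SFree G α S F :=
  exists_free_set_general V G k α hα1 S hS
end

section
/- Let α ∈ [2/3, 1), let k ≥ 1 be an integer, let G be a graph and let S ⊆ V(G) be a (3k+1, α)-well-linked set. If F ⊆ V(G) is S-free with |F| = 3k, then 𝒯_F := {(A,B) : (A,B) is a separation of G of order less than k with |B ∩ F| > 2k} is a tangle of order k in G, and 𝒯_F is a truncation of 𝒯_S, i.e. 𝒯_F ⊆ 𝒯_S. -/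
open SimpleGraph

section TangleHelpers

set_option linter.unusedSectionVars false

variable {V : Type} [Finite V] {G : SimpleGraph V}

private lemma isSep_symm {A B : Set V} (h : IsSep G A B) : IsSep G B A := by
  refine ⟨by rw [Set.union_comm]; exact h.1, ?_⟩
  intro u v hadj hu hv
  exact h.2 v u hadj.symm hv hu

private lemma isSep_union_left {A B : Set V} (F : Set V) (h : IsSep G A B) :
    IsSep G (A ∪ F) B := by
  constructor
  · apply Set.eq_univ_of_univ_subset
    rw [← h.1]
    intro x hx
    rcases hx with hx | hx
    · exact Or.inl (Or.inl hx)
    · exact Or.inr hx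
  · intro u v hadj hu hv
    have huB : u ∉ B := hu.2
    have huA : u ∈ A := by
      rcases hu.1 with h' | h'
      · exact h'
      · have hx : u ∈ A ∪ B := h.1 ▸ Set.mem_univ u
        exact hx.resolve_right huB
    exact h.2 u v hadj ⟨huA, huB⟩ ⟨hv.1, fun hvA => hv.2 (Or.inl hvA)⟩

private lemma side_of_compl {A B Z : Set V} (hsep : IsSep G A B) (hZ : A ∩ B ⊆ Z)
    {x : V} (hx : x ∈ Zᶜ) : (x ∈ A ∧ x ∉ B) ∨ (x ∈ B ∧ x ∉ A) := by
  have hx' : x ∈ A ∪ B := hsep.1 ▸ Set.mem_univ x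
  by_cases hA : x ∈ A
  · exact Or.inl ⟨hA, fun hB => hx (hZ ⟨hA, hB⟩)⟩
  · exact Or.inr ⟨hx'.resolve_left hA, hA⟩

private lemma walk_side {A B Z : Set V} (hsep : IsSep G A B) (hZ : A ∩ B ⊆ Z)
    {u v : (Zᶜ : Set V)} (p : (G.induce (Zᶜ : Set V)).Walk u v) :
    ((u : V) ∈ A ↔ (v : V) ∈ A) := by
  induction p with
  | nil => exact Iff.rfl
  | @cons a b c hadj p ih =>
    refine Iff.trans ?_ ih
    have hG : G.Adj (a : V) (b : V) := hadj
    constructor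
    · intro haA
      by_contra hbA
      rcases side_of_compl hsep hZ b.2 with ⟨h1, _⟩ | ⟨hbB, _⟩
      · exact hbA h1
      · exact hsep.2 a b hG ⟨haA, fun hB => a.2 (hZ ⟨haA, hB⟩)⟩ ⟨hbB, hbA⟩
    · intro hbA
      by_contra haA
      rcases side_of_compl hsep hZ a.2 with ⟨h1, _⟩ | ⟨haB, _⟩
      · exact haA h1
      · exact hsep.2 b a hG.symm ⟨hbA, fun hB => b.2 (hZ ⟨hbA, hB⟩)⟩ ⟨haB, haA⟩

private lemma comp_side {A B Z : Set V} (hsep : IsSep G A B) (hZ : A ∩ B ⊆ Z)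
    (C : (G.induce (Zᶜ : Set V)).ConnectedComponent) :
    (Subtype.val '' C.supp ⊆ A \ B) ∨ (Subtype.val '' C.supp ⊆ B \ A) := by
  obtain ⟨v₀, hv₀⟩ := C.exists_rep
  have hreach : ∀ u : (Zᶜ : Set V), u ∈ C.supp → ((u : V) ∈ A ↔ (v₀ : V) ∈ A) := by
    intro u hu
    rw [SimpleGraph.ConnectedComponent.mem_supp_iff] at hu
    obtain ⟨p⟩ := SimpleGraph.ConnectedComponent.exact (hu.trans hv₀.symm)
    exact walk_side hsep hZ p
  by_cases hA : (v₀ : V) ∈ A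
  · left
    rintro x ⟨u, hu, rfl⟩
    have huA : (u : V) ∈ A := (hreach u hu).mpr hA
    exact ⟨huA, fun hB => u.2 (hZ ⟨huA, hB⟩)⟩
  · right
    rintro x ⟨u, hu, rfl⟩
    have huA : (u : V) ∉ A := fun h => hA ((hreach u hu).mp h)
    rcases side_of_compl hsep hZ u.2 with ⟨h1, _⟩ | hside
    · exact absurd h1 huA
    · exact hside

private lemma exists_big_comp {α : ℝ} {S : Set V} {q : ℕ} (hS : WellLinked G q α S)
    {Z : Set V} (hZ : Z.ncard ≤ q) :
    ∃ C : (G.induce (Zᶜ : Set V)).ConnectedComponent,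
      α * (S.ncard : ℝ) < (((Subtype.val '' C.supp) ∩ S).ncard : ℝ) := by
  have h := hS Z hZ
  simp only [IsBalSep, not_forall, not_le] at h
  exact h

private lemma no_two_big {α : ℝ} (hα1 : 2 / 3 ≤ α) {S P Q : Set V}
    (hP : P ⊆ S) (hQ : Q ⊆ S) (hd : ∀ x, x ∈ P → x ∉ Q)
    (h1 : α * (S.ncard : ℝ) < (P.ncard : ℝ))
    (h2 : α * (S.ncard : ℝ) < (Q.ncard : ℝ)) : False := by
  have hPQ : P.ncard + Q.ncard ≤ S.ncard := by
    rw [← Set.ncard_union_eq (Set.disjoint_left.mpr hd)]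
    exact Set.ncard_le_ncard (Set.union_subset hP hQ)
  have hcast : (P.ncard : ℝ) + (Q.ncard : ℝ) ≤ (S.ncard : ℝ) := by
    exact_mod_cast hPQ
  have hS0 : (0 : ℝ) ≤ (S.ncard : ℝ) := Nat.cast_nonneg _
  nlinarith [mul_le_mul_of_nonneg_right hα1 hS0]

private lemma card_split {A B : Set V} (F : Set V) (hU : A ∪ B = Set.univ) :
    (A ∩ F).ncard + (B ∩ F).ncard = F.ncard + (A ∩ B ∩ F).ncard := by
  have h1 : (A ∩ F) ∪ (B ∩ F) = F := by
    rw [← Set.union_inter_distrib_right, hU, Set.univ_inter]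
  have h2 : (A ∩ F) ∩ (B ∩ F) = A ∩ B ∩ F := by
    ext x
    simp only [Set.mem_inter_iff]
    tauto
  have h3 := Set.ncard_union_add_ncard_inter (A ∩ F) (B ∩ F)
  rw [h1, h2] at h3
  omega

/-- If `Z ⊇ F ∩ A` and a component of `G - Z` with big `S`-share lies in `A \ B`,
we get a contradiction using `S`-freeness of `F`. -/
private lemma side_contra {α : ℝ} (hα1 : 2 / 3 ≤ α) {S F A B : Set V}
    (hF : SFree G α S F) (hsep : IsSep G A B)
    (hordBA : ((B ∪ F) ∩ A).ncard < F.ncard)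
    {Z : Set V} (hFZ : F ∩ A ⊆ Z)
    {C : (G.induce (Zᶜ : Set V)).ConnectedComponent}
    (hC : α * (S.ncard : ℝ) < (((Subtype.val '' C.supp) ∩ S).ncard : ℝ))
    (hside : Subtype.val '' C.supp ⊆ A \ B) : False := by
  have hsep' : IsSep G (B ∪ F) A := isSep_union_left F (isSep_symm hsep)
  have hfree := (hF (B ∪ F) A hsep' hordBA).1 Set.subset_union_right
  refine no_two_big hα1 (Set.inter_subset_right) (Set.inter_subset_right (s := B ∪ F)) ?_ hC ?_
  · rintro x ⟨hxC, hxS⟩ ⟨hxBF, _⟩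
    obtain ⟨u, hu, rfl⟩ := hxC
    have hA : (u : V) ∈ A \ B := hside ⟨u, hu, rfl⟩
    rcases hxBF with hB | hFm
    · exact hA.2 hB
    · exact u.2 (hFZ ⟨hFm, hA.1⟩)
  · exact hfree


private lemma big_S_side {k : ℕ} (hk : 1 ≤ k) {α : ℝ} (hα1 : 2 / 3 ≤ α) {S F : Set V}
    (hS : WellLinked G (3 * k + 1) α S) (hF : SFree G α S F) (hFcard : F.ncard = 3 * k)
    {A B : Set V} (hsep : IsSep G A B) (hord : (A ∩ B).ncard < k)
    (hBF : 2 * k < (B ∩ F).ncard) : α * (S.ncard : ℝ) < ((S ∩ B).ncard : ℝ) := by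
  have hsplit := card_split F hsep.1
  have hABF : (A ∩ B ∩ F).ncard ≤ (A ∩ B).ncard :=
    Set.ncard_le_ncard Set.inter_subset_left
  have hAF : (A ∩ F).ncard + 2 ≤ 2 * k := by omega
  have hZcard : ((A ∩ B) ∪ (F ∩ A)).ncard ≤ 3 * k + 1 := by
    have h1 := Set.ncard_union_le (A ∩ B) (F ∩ A)
    have h2 : (F ∩ A).ncard = (A ∩ F).ncard := by rw [Set.inter_comm]
    omega
  obtain ⟨C, hC⟩ := exists_big_comp hS hZcard
  rcases comp_side hsep Set.subset_union_left C with hside | hside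
  · exfalso
    have hord' : ((B ∪ F) ∩ A).ncard < F.ncard := by
      have hsub : (B ∪ F) ∩ A ⊆ (A ∩ B) ∪ (A ∩ F) := by
        rintro x ⟨hx | hx, hA⟩
        · exact Or.inl ⟨hA, hx⟩
        · exact Or.inr ⟨hA, hx⟩
      have h1 := Set.ncard_le_ncard hsub
      have h2 := Set.ncard_union_le (A ∩ B) (A ∩ F)
      omega
    exact side_contra hα1 hF hsep hord' Set.subset_union_right hC hside
  · have hsub : (Subtype.val '' C.supp) ∩ S ⊆ S ∩ B := by
      rintro x ⟨hxC, hxS⟩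
      exact ⟨hxS, (hside hxC).1⟩
    have hle := Set.ncard_le_ncard hsub
    calc α * (S.ncard : ℝ) < _ := hC
      _ ≤ _ := Nat.cast_le.mpr hle

private lemma one_side_big {k : ℕ} (hk : 1 ≤ k) {α : ℝ} (hα1 : 2 / 3 ≤ α) {S F : Set V}
    (hS : WellLinked G (3 * k + 1) α S) (hF : SFree G α S F) (hFcard : F.ncard = 3 * k)
    {A B : Set V} (hsep : IsSep G A B) (hord : (A ∩ B).ncard < k) :
    2 * k < (A ∩ F).ncard ∨ 2 * k < (B ∩ F).ncard := by
  by_contra hcon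
  push_neg at hcon
  obtain ⟨hA2k, hB2k⟩ := hcon
  have hordAB : ((A ∪ F) ∩ B).ncard < F.ncard := by
    have hsub : (A ∪ F) ∩ B ⊆ (A ∩ B) ∪ (B ∩ F) := by
      rintro x ⟨hx | hx, hB⟩
      · exact Or.inl ⟨hx, hB⟩
      · exact Or.inr ⟨hB, hx⟩
    have h1 := Set.ncard_le_ncard hsub
    have h2 := Set.ncard_union_le (A ∩ B) (B ∩ F)
    omega
  have hordBA : ((B ∪ F) ∩ A).ncard < F.ncard := by
    have hsub : (B ∪ F) ∩ A ⊆ (A ∩ B) ∪ (A ∩ F) := by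
      rintro x ⟨hx | hx, hA⟩
      · exact Or.inl ⟨hA, hx⟩
      · exact Or.inr ⟨hA, hx⟩
    have h1 := Set.ncard_le_ncard hsub
    have h2 := Set.ncard_union_le (A ∩ B) (A ∩ F)
    omega
  have hZ1card : ((B ∩ A) ∪ (F ∩ B)).ncard ≤ 3 * k + 1 := by
    have h1 := Set.ncard_union_le (B ∩ A) (F ∩ B)
    have h2 : (B ∩ A).ncard = (A ∩ B).ncard := by rw [Set.inter_comm]
    have h3 : (F ∩ B).ncard = (B ∩ F).ncard := by rw [Set.inter_comm]
    omega
  obtain ⟨C₁, hC₁⟩ := exists_big_comp hS hZ1card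
  rcases comp_side (isSep_symm hsep) Set.subset_union_left C₁ with hs1 | hs1
  · exact side_contra hα1 hF (isSep_symm hsep) hordAB Set.subset_union_right hC₁ hs1
  · have hZ2card : ((A ∩ B) ∪ (F ∩ A)).ncard ≤ 3 * k + 1 := by
      have h1 := Set.ncard_union_le (A ∩ B) (F ∩ A)
      have h2 : (F ∩ A).ncard = (A ∩ F).ncard := by rw [Set.inter_comm]
      omega
    obtain ⟨C₂, hC₂⟩ := exists_big_comp hS hZ2card
    rcases comp_side hsep Set.subset_union_left C₂ with hs2 | hs2
    · exact side_contra hα1 hF hsep hordBA Set.subset_union_right hC₂ hs2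
    · refine no_two_big hα1 Set.inter_subset_right Set.inter_subset_right ?_ hC₁ hC₂
      rintro x ⟨hxC, hxS⟩ ⟨hxC', _⟩
      exact (hs2 hxC').2 (hs1 hxC).1

end TangleHelpers

/-- Lemma 3.7: an `S`-free set `F` of size `3k` induces a tangle `𝒯_F` of
order `k` which is a truncation of `𝒯_S`. -/
theorem tangle_of_free_set
    (V : Type) [Finite V] (G : SimpleGraph V) (k : ℕ) (hk : 1 ≤ k)
    (α : ℝ) (hα1 : 2 / 3 ≤ α) (hα2 : α < 1) (S : Set V)
    (hS : WellLinked G (3 * k + 1) α S)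
    (F : Set V) (hF : SFree G α S F) (hFcard : F.ncard = 3 * k) :
    IsTangle G k
      {p : Set V × Set V |
        IsSep G p.1 p.2 ∧ (p.1 ∩ p.2).ncard < k ∧ 2 * k < (p.2 ∩ F).ncard} ∧
    {p : Set V × Set V |
        IsSep G p.1 p.2 ∧ (p.1 ∩ p.2).ncard < k ∧ 2 * k < (p.2 ∩ F).ncard}
      ⊆ wlTangle G (3 * k + 1) α S := by
  have hsub : {p : Set V × Set V |
      IsSep G p.1 p.2 ∧ (p.1 ∩ p.2).ncard < k ∧ 2 * k < (p.2 ∩ F).ncard}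
      ⊆ wlTangle G (3 * k + 1) α S := by
    rintro ⟨A, B⟩ ⟨hsep, hord, hBF⟩
    exact ⟨hsep, le_of_lt (lt_of_lt_of_le hord (by omega)),
      big_S_side hk hα1 hS hF hFcard hsep hord hBF⟩
  refine ⟨⟨?_, ?_, ?_⟩, hsub⟩
  · rintro p ⟨hsep, hord, _⟩
    exact ⟨hsep, hord⟩
  · intro A B hsep hord
    have h1 := one_side_big hk hα1 hS hF hFcard hsep hord
    have hsplit := card_split F hsep.1
    have hABF : (A ∩ B ∩ F).ncard ≤ (A ∩ B).ncard :=
      Set.ncard_le_ncard Set.inter_subset_left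
    have hnotboth : ¬ (2 * k < (A ∩ F).ncard ∧ 2 * k < (B ∩ F).ncard) := by omega
    have hsep' : IsSep G B A := isSep_symm hsep
    have hord' : (B ∩ A).ncard < k := by rw [Set.inter_comm]; exact hord
    rcases h1 with h | h
    · right
      refine ⟨⟨hsep', hord', h⟩, ?_⟩
      rintro ⟨_, _, hBF⟩
      exact hnotboth ⟨h, hBF⟩
    · left
      refine ⟨⟨hsep, hord, h⟩, ?_⟩
      rintro ⟨_, _, hAF⟩
      exact hnotboth ⟨hAF, h⟩
  · rintro p q r ⟨hsep1, hord1, hF1⟩ ⟨hsep2, hord2, hF2⟩ ⟨hsep3, hord3, hF3⟩ hUniv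
    have hZcard : ((p.1 ∩ p.2 ∪ q.1 ∩ q.2) ∪ r.1 ∩ r.2).ncard ≤ 3 * k + 1 := by
      have h1 := Set.ncard_union_le (p.1 ∩ p.2 ∪ q.1 ∩ q.2) (r.1 ∩ r.2)
      have h2 := Set.ncard_union_le (p.1 ∩ p.2) (q.1 ∩ q.2)
      omega
    obtain ⟨C, hC⟩ := exists_big_comp hS hZcard
    have hα0 : (0 : ℝ) ≤ α * (S.ncard : ℝ) :=
      mul_nonneg (le_trans (by norm_num) hα1) (Nat.cast_nonneg _)
    have hpos : 0 < ((Subtype.val '' C.supp) ∩ S).ncard := by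
      have h0 : (0 : ℝ) < (((Subtype.val '' C.supp) ∩ S).ncard : ℝ) :=
        lt_of_le_of_lt hα0 hC
      exact_mod_cast h0
    obtain ⟨x, hx⟩ := Set.nonempty_of_ncard_ne_zero hpos.ne'
    have key : ∀ A B : Set V, IsSep G A B → (A ∩ B).ncard < k → 2 * k < (B ∩ F).ncard →
        A ∩ B ⊆ (p.1 ∩ p.2 ∪ q.1 ∩ q.2) ∪ r.1 ∩ r.2 → x ∈ A → False := by
      intro A B hsep hord hBF hZsub hxA
      have hbig := big_S_side hk hα1 hS hF hFcard hsep hord hBF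
      rcases comp_side hsep hZsub C with hside | hside
      · refine no_two_big hα1 Set.inter_subset_right Set.inter_subset_left ?_ hC hbig
        rintro y ⟨hyC, hyS⟩ ⟨_, hyB⟩
        exact (hside hyC).2 hyB
      · exact (hside hx.1).2 hxA
    have hx3 : x ∈ p.1 ∪ q.1 ∪ r.1 := hUniv ▸ Set.mem_univ x
    rcases hx3 with (hxp | hxq) | hxr
    · exact key p.1 p.2 hsep1 hord1 hF1 (fun y hy => Or.inl (Or.inl hy)) hxp
    · exact key q.1 q.2 hsep2 hord2 hF2 (fun y hy => Or.inl (Or.inr hy)) hxq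
    · exact key r.1 r.2 hsep3 hord3 hF3 (fun y hy => Or.inr hy) hxr
end

section
/- Let k ≥ 2 be an integer, let G be a graph, and let (M, T) be an expansion of the (k × k)-grid with M a subgraph of G. Let Q be any single row or column of the (k × k)-grid and, for each vertex v of Q, choose one vertex x_v of degree at least three in M among the vertices of M representing v. Then the set S = {x_v : v ∈ V(Q)} is strongly linked in G. -/
open SimpleGraph

/-!
Let `(A₁, A₂)` be a separation with `|A₁ ∩ A₂| < min(|S₁|, |S₂|)`. Since the branch sets are
disjoint, fewer than that many of them meet `A₁ ∩ A₂`. Hence some row of the grid, some column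
through a representative in `S₁` and some column through a representative in `S₂` have all their
branch sets outside `A₁ ∩ A₂`. Walking along these lines from one representative to the other,
each branch set is connected and joined by an edge to the next, so none of them can cross the
separator: the whole walk stays in `A₁ ∖ A₂`, contradicting that it ends in `S₂ ⊆ A₂`.
-/

open Set Relation Function

namespace IsSep

variable {V : Type*} {G : SimpleGraph V} {A B : Set V}

lemma mem_diff_of_adj (h : IsSep G A B) {a c : V} (hac : G.Adj a c) (ha : a ∈ A \ B)
    (hc : c ∉ A ∩ B) : c ∈ A \ B := by
  have hcB : c ∉ B \ A := h.2 a c hac ha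
  have hcAB : c ∈ A ∪ B := h.1 ▸ mem_univ c
  by_cases hcA : c ∈ A
  · exact ⟨hcA, fun hcB' => hc ⟨hcA, hcB'⟩⟩
  · exact absurd ⟨hcAB.resolve_left hcA, hcA⟩ hcB

lemma mem_diff_of_walk (h : IsSep G A B) {a b : V} (w : G.Walk a b)
    (hw : ∀ y ∈ w.support, y ∉ A ∩ B) (ha : a ∈ A \ B) : b ∈ A \ B := by
  induction w with
  | nil => exact ha
  | cons hac p ih =>
    refine ih (fun y hy => hw y (List.mem_cons_of_mem _ hy)) (h.mem_diff_of_adj hac ha ?_)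
    exact hw _ (List.mem_cons_of_mem _ p.start_mem_support)

lemma subset_diff_of_preconnected (h : IsSep G A B) {M : G.Subgraph} {T : Set V}
    (hTM : T ⊆ M.verts) (hT : (M.coe.induce {x : M.verts | (x : V) ∈ T}).Preconnected)
    (hTAB : Disjoint T (A ∩ B)) {a : V} (haT : a ∈ T) (ha : a ∈ A \ B) : T ⊆ A \ B := by
  intro b hbT
  obtain ⟨w⟩ := hT ⟨⟨a, hTM haT⟩, haT⟩ ⟨⟨b, hTM hbT⟩, hbT⟩
  let φ : M.coe.induce {x : M.verts | (x : V) ∈ T} →g G :=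
    M.hom.comp (Embedding.induce _).toHom
  refine h.mem_diff_of_walk (w.map φ) (fun y hy => ?_) ha
  obtain ⟨z, -, rfl⟩ := List.mem_map.mp ((w.support_map φ) ▸ hy)
  exact disjoint_left.mp hTAB z.2

end IsSep

structure IsMinorModel {α V : Type*} {G : SimpleGraph V} (H : SimpleGraph α) (M : G.Subgraph)
    (S : α → Set V) : Prop where
  subset_verts : ∀ a, S a ⊆ M.verts
  pairwise_disjoint : Pairwise (Disjoint on S)
  preconnected : ∀ a, (M.coe.induce {x : M.verts | (x : V) ∈ S a}).Preconnected
  exists_adj : ∀ a b, H.Adj a b → ∃ x ∈ S a, ∃ y ∈ S b, M.Adj x y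

namespace IsMinorModel

variable {α β V : Type*} {G : SimpleGraph V} {H : SimpleGraph α} {M : G.Subgraph}
  {S : α → Set V}

lemma comap (hS : IsMinorModel H M S) {H' : SimpleGraph β} (φ : H' ↪g H) :
    IsMinorModel H' M (S ∘ φ) where
  subset_verts b := hS.subset_verts (φ b)
  pairwise_disjoint := hS.pairwise_disjoint.comp_of_injective φ.injective
  preconnected b := hS.preconnected (φ b)
  exists_adj a b hab := hS.exists_adj (φ a) (φ b) (φ.map_rel_iff.mpr hab)

lemma subset_diff_of_reflTransGen (hS : IsMinorModel H M S) {A B : Set V} (hAB : IsSep G A B)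
    {a b : α} (hab : ReflTransGen (fun u v => H.Adj u v ∧ Disjoint (S v) (A ∩ B)) a b)
    (ha : S a ⊆ A \ B) : S b ⊆ A \ B := by
  induction hab with
  | refl => exact ha
  | tail _ huv ih =>
    obtain ⟨x, hx, y, hy, hxy⟩ := hS.exists_adj _ _ huv.1
    have hyAB : y ∈ A \ B :=
      hAB.mem_diff_of_adj (M.adj_sub hxy) (ih hx) (disjoint_left.mp huv.2 hy)
    exact hAB.subset_diff_of_preconnected (hS.subset_verts _) (hS.preconnected _) huv.2 hy hyAB

end IsMinorModel

lemma ncard_setOf_not_disjoint_le {α V : Type*} {S : α → Set V} (hS : Pairwise (Disjoint on S))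
    {Z : Set V} (hZ : Z.Finite := by toFinite_tac) :
    {a | ¬Disjoint (S a) Z}.ncard ≤ Z.ncard := by
  rcases eq_empty_or_nonempty {a | ¬Disjoint (S a) Z} with hW | ⟨a₀, ha₀⟩
  · simp [hW]
  obtain ⟨z₀, -⟩ := not_disjoint_iff.mp ha₀
  have : Nonempty V := ⟨z₀⟩
  choose! f hfS hfZ using fun a (ha : ¬Disjoint (S a) Z) => not_disjoint_iff.mp ha
  refine ncard_le_ncard_of_injOn f hfZ (fun a ha b hb hfab => ?_) hZ
  by_contra hne
  exact disjoint_left.mp (hS hne) (hfS a ha) (hfab ▸ hfS b hb)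

lemma reflTransGen_comp_of_covBy {β α : Type*} [LinearOrder β] [SuccOrder β]
    [IsSuccArchimedean β] {r : α → α → Prop} {f : β → α}
    (hf : ∀ i j, i ⋖ j → r (f i) (f j) ∧ r (f j) (f i)) (a b : β) :
    ReflTransGen r (f a) (f b) := by
  refine ReflTransGen.lift f (fun _ _ h => h) _ _
    (reflTransGen_of_succ (r on f) (fun i hi => ?_) fun i hi => ?_)
  · exact (hf _ _ (Order.covBy_succ_of_not_isMax (not_isMax_of_lt hi.2))).1
  · exact (hf _ _ (Order.covBy_succ_of_not_isMax (not_isMax_of_lt hi.2))).2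

section Grid

variable {k : ℕ}

lemma gridGraph_adj_of_covBy_snd (r : Fin k) {a b : Fin k} (hab : a ⋖ b) :
    (gridGraph k).Adj (r, a) (r, b) := by
  have : (a : ℕ) + 1 = b := by simpa using hab
  exact (fromRel_adj _ _ _).mpr
    ⟨fun h => hab.ne (congrArg Prod.snd h), .inl (.inl ⟨rfl, this⟩)⟩

lemma gridGraph_adj_of_covBy_fst (c : Fin k) {a b : Fin k} (hab : a ⋖ b) :
    (gridGraph k).Adj (a, c) (b, c) := by
  have : (a : ℕ) + 1 = b := by simpa using hab
  exact (fromRel_adj _ _ _).mpr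
    ⟨fun h => hab.ne (congrArg Prod.fst h), .inl (.inr ⟨rfl, this⟩)⟩

def gridGraph.transpose (k : ℕ) : gridGraph k ≃g gridGraph k where
  toEquiv := Equiv.prodComm _ _
  map_rel_iff' {u v} := by
    simp only [gridGraph, fromRel_adj, Equiv.prodComm_apply, Prod.fst_swap, Prod.snd_swap, ne_eq,
      Prod.swap_inj]
    tauto

lemma gridGraph_reflTransGen_of_lines {P : Fin k × Fin k → Prop} {i r c₁ c₂ : Fin k}
    (hr : ∀ c, P (r, c)) (hc₁ : ∀ r', P (r', c₁)) (hc₂ : ∀ r', P (r', c₂)) :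
    ReflTransGen (fun u v => (gridGraph k).Adj u v ∧ P v) (i, c₁) (i, c₂) := by
  have column (c : Fin k) (hc : ∀ r', P (r', c)) (a b : Fin k) :
      ReflTransGen (fun u v => (gridGraph k).Adj u v ∧ P v) (a, c) (b, c) :=
    reflTransGen_comp_of_covBy (f := fun r' => (r', c)) (fun _ _ h =>
      ⟨⟨gridGraph_adj_of_covBy_fst c h, hc _⟩,
        ⟨(gridGraph_adj_of_covBy_fst c h).symm, hc _⟩⟩) a b
  have row : ReflTransGen (fun u v => (gridGraph k).Adj u v ∧ P v) (r, c₁) (r, c₂) :=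
    reflTransGen_comp_of_covBy (f := fun c => (r, c)) (fun _ _ h =>
      ⟨⟨gridGraph_adj_of_covBy_snd r h, hr _⟩,
        ⟨(gridGraph_adj_of_covBy_snd r h).symm, hr _⟩⟩) _ _
  exact ((column c₁ hc₁ i r).trans row).trans (column c₂ hc₂ r i)

end Grid

lemma IsMinorModel.stronglyLinked_range_row {V : Type*} [Finite V] {G : SimpleGraph V}
    {M : G.Subgraph} {k : ℕ} {S : Fin k × Fin k → Set V} (hS : IsMinorModel (gridGraph k) M S)
    (i : Fin k) (y : Fin k → V) (hy : ∀ c, y c ∈ S (i, c)) : StronglyLinked G (range y) := by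
  intro S₁ S₂ hS₁₂ _ _ _ A₁ A₂ hsep hS₁A hS₂A
  by_contra! hlt
  set Z := A₁ ∩ A₂
  set W := {v | ¬Disjoint (S v) Z}
  have hW (T : Set V) (hT : T ⊆ range y) (hZT : Z.ncard < T.ncard) :
      W.ncard < (y ⁻¹' T).ncard :=
    calc W.ncard ≤ Z.ncard := ncard_setOf_not_disjoint_le hS.pairwise_disjoint
      _ < T.ncard := hZT
      _ = (y '' (y ⁻¹' T)).ncard := by rw [image_preimage_eq_of_subset hT]
      _ ≤ (y ⁻¹' T).ncard := ncard_image_le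
  have hW₁ := hW S₁ (hS₁₂ ▸ subset_union_left) (hlt.trans_le (min_le_left _ _))
  have hW₂ := hW S₂ (hS₁₂ ▸ subset_union_right) (hlt.trans_le (min_le_right _ _))
  have hfree {v : Fin k × Fin k} {p : Fin k × Fin k → Fin k} (hv : p v ∉ p '' W) :
      Disjoint (S v) Z :=
    not_not.mp fun hvW => hv ⟨v, hvW, rfl⟩
  obtain ⟨r, -, hr⟩ := exists_mem_notMem_of_ncard_lt_ncard (s := Prod.fst '' W) (t := univ)
    ((ncard_image_le).trans_lt (hW₁.trans_le (ncard_le_ncard (subset_univ _))))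
  obtain ⟨c₁, hc₁, hc₁W⟩ :=
    exists_mem_notMem_of_ncard_lt_ncard (s := Prod.snd '' W) ((ncard_image_le).trans_lt hW₁)
  obtain ⟨c₂, hc₂, hc₂W⟩ :=
    exists_mem_notMem_of_ncard_lt_ncard (s := Prod.snd '' W) ((ncard_image_le).trans_lt hW₂)
  have hpath := gridGraph_reflTransGen_of_lines (i := i) (P := fun v => Disjoint (S v) Z)
    (fun c => hfree (p := Prod.fst) hr) (fun _ => hfree hc₁W) (fun _ => hfree hc₂W)
  have hstart : S (i, c₁) ⊆ A₁ \ A₂ :=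
    hsep.subset_diff_of_preconnected (hS.subset_verts _) (hS.preconnected _) (hfree hc₁W)
      (hy c₁) ⟨hS₁A hc₁, fun h => disjoint_left.mp (hfree hc₁W) (hy c₁) ⟨hS₁A hc₁, h⟩⟩
  exact (hS.subset_diff_of_reflTransGen hsep hpath hstart (hy c₂)).2 (hS₂A hc₂)

theorem representative_set_stronglyLinked_general
    (k : ℕ) (V : Type) [Finite V] (G : SimpleGraph V)
    (M : G.Subgraph) (S : Fin k × Fin k → Set V)
    (hsub : ∀ v, S v ⊆ M.verts)
    (hdisj : ∀ u v, u ≠ v → Disjoint (S u) (S v))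
    (hconn : ∀ v, (M.coe.induce {x : M.verts | (x : V) ∈ S v}).Connected)
    (hedges : ∀ u v, (gridGraph k).Adj u v → ∃ x ∈ S u, ∃ y ∈ S v, M.Adj x y)
    (Q : Set (Fin k × Fin k))
    (hQ : (∃ i, Q = {p | p.1 = i}) ∨ (∃ j, Q = {p | p.2 = j}))
    (x : Fin k × Fin k → V)
    (hx : ∀ v ∈ Q, x v ∈ S v) :
    StronglyLinked G (x '' Q) := by
  have hS : IsMinorModel (gridGraph k) M S :=
    ⟨hsub, hdisj, fun v => (hconn v).preconnected, hedges⟩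
  rcases hQ with ⟨i, rfl⟩ | ⟨j, rfl⟩
  · have hrow : x '' {p | p.1 = i} = range fun c => x (i, c) := by
      ext; simp [Prod.exists]
    exact hrow ▸ hS.stronglyLinked_range_row i _ fun c => hx _ rfl
  · have hcol : x '' {p | p.2 = j} = range fun r => x (r, j) := by
      ext; simp [Prod.exists]
    exact hcol ▸ (hS.comap (gridGraph.transpose k).toEmbedding).stronglyLinked_range_row j _
      fun r => hx _ rfl

/-- Observation 3.9: a representative set of a row or column of a grid
expansion is strongly linked. -/
theorem representative_set_stronglyLinked
    (k : ℕ) (hk : 2 ≤ k) (V : Type) [Finite V] (G : SimpleGraph V)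
    (M : G.Subgraph) (S : Fin k × Fin k → Set V)
    (hsub : ∀ v, S v ⊆ M.verts)
    (hcover : (⋃ v, S v) = M.verts)
    (hdisj : ∀ u v, u ≠ v → Disjoint (S u) (S v))
    (hconn : ∀ v, (M.coe.induce {x : M.verts | (x : V) ∈ S v}).Connected)
    (hedges : ∀ u v, (gridGraph k).Adj u v → ∃ x ∈ S u, ∃ y ∈ S v, M.Adj x y)
    (Q : Set (Fin k × Fin k))
    (hQ : (∃ i, Q = {p | p.1 = i}) ∨ (∃ j, Q = {p | p.2 = j}))
    (x : Fin k × Fin k → V)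
    (hx : ∀ v ∈ Q, x v ∈ S v)
    (hdeg : ∀ v ∈ Q, 3 ≤ (M.neighborSet (x v)).ncard) :
    StronglyLinked G (x '' Q) :=
  representative_set_stronglyLinked_general k V G M S hsub hdisj hconn hedges Q hQ x hx
end

section
/- There is a universal constant c such that for every integer t ≥ 1 and every graph G that contains a crossed t-grid as a subgraph, it holds that t ≤ c · (hw(G))². -/
open SimpleGraph

/-!
For `1 ≤ r ≤ t`, the `r`-th hook of the crossed `t`-grid runs along row `r` from column `0` to
column `r` and then down column `r` to row `t + 1`. Distinct hooks share no edge, and the hooks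
`r` and `r'` meet at the grid vertex `(max r r', min r r')`. In the line graph of the subdivided
grid, two edges at a common vertex are adjacent, so the edge sets of the subdivided hooks are
connected, pairwise disjoint and pairwise adjacent: they are the branch sets of a `K_t` minor.
Hence `t ≤ hw G`, and `c = 1` works.
-/

open Function

namespace SimpleGraph

variable {V W : Type*}

lemma Connected.induce_image {G : SimpleGraph V} {G' : SimpleGraph W} (φ : G →g G')
    {s : Set V} (h : (G.induce s).Connected) : (G'.induce (φ '' s)).Connected :=
  h.map (induceHom φ (Set.mapsTo_image φ s)) <| by
    rintro ⟨_, x, hx, rfl⟩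
    exact ⟨⟨x, hx⟩, rfl⟩

end SimpleGraph

section Minors

variable {ι V W : Type*} {H : SimpleGraph ι} {G : SimpleGraph V}

theorem IsMinor.map {G' : SimpleGraph W} (φ : G →g G') (hφ : Injective φ) (h : IsMinor H G) :
    IsMinor H G' := by
  obtain ⟨S, hconn, hdisj, hadj⟩ := h
  refine ⟨fun a => φ '' S a, fun a => (hconn a).induce_image φ,
    fun a b hab => (Set.disjoint_image_iff hφ).2 (hdisj a b hab), fun a b hab => ?_⟩
  obtain ⟨x, hx, y, hy, hxy⟩ := hadj a b hab
  exact ⟨φ x, Set.mem_image_of_mem φ hx, φ y, Set.mem_image_of_mem φ hy, φ.map_adj hxy⟩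

theorem IsMinor.card_le [Finite V] (h : IsMinor H G) : Nat.card ι ≤ Nat.card V := by
  obtain ⟨S, hconn, hdisj, -⟩ := h
  let g : ι → V := fun a => (hconn a).nonempty.some
  refine Nat.card_le_card_of_injective g fun a b hab => ?_
  by_contra hne
  exact (hdisj a b hne).ne_of_mem (hconn a).nonempty.some.2 (hconn b).nonempty.some.2 hab

theorem le_hw [Finite V] {m : ℕ} (h : IsMinor (⊤ : SimpleGraph (Fin m)) G) : m ≤ hw G :=
  le_csSup ⟨Nat.card V, fun k hk => by simpa using hk.card_le⟩ h

end Minors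

namespace SimpleGraph

variable {W : Type*} {K : SimpleGraph W}

lemma lineGraph'_adj_of_mem {e e' : K.edgeSet} (hne : e ≠ e') {x : W} (hx : x ∈ (e : Sym2 W))
    (hx' : x ∈ (e' : Sym2 W)) : (lineGraph' K).Adj e e' := by
  rw [lineGraph', fromRel_adj]
  exact ⟨hne, Or.inl ⟨x, hx, hx'⟩⟩

lemma connected_induce_lineGraph'_pair {e e' : K.edgeSet} {x : W} (hx : x ∈ (e : Sym2 W))
    (hx' : x ∈ (e' : Sym2 W)) : ((lineGraph' K).induce {e, e'}).Connected := by
  by_cases h : e = e'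
  · subst h
    rw [Set.pair_eq_singleton, induce_singleton_eq_top]
    exact connected_top
  · exact induce_pair_connected_of_adj (lineGraph'_adj_of_mem h hx hx')

theorem Walk.connected_induce_lineGraph'_edgeSet {u v : W} (w : K.Walk u v) (hw : ¬w.Nil) :
    ((lineGraph' K).induce (Subtype.val ⁻¹' w.edgeSet)).Connected := by
  induction w with
  | nil => simp at hw
  | @cons u v x h w ih =>
    by_cases hnil : w.Nil
    · cases hnil
      have hedges : Subtype.val ⁻¹' (cons h nil).edgeSet = {(⟨s(u, v), h⟩ : K.edgeSet)} := by
        ext; simp [Subtype.ext_iff]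
      rw [hedges, induce_singleton_eq_top]
      exact connected_top
    · let e : K.edgeSet := ⟨s(u, v), h⟩
      let e' : K.edgeSet := ⟨s(v, w.snd), w.edges_subset_edgeSet (w.mk_start_snd_mem_edges hnil)⟩
      have he' : e' ∈ Subtype.val ⁻¹' w.edgeSet := w.mk_start_snd_mem_edges hnil
      have hedges : Subtype.val ⁻¹' (cons h w).edgeSet = {e, e'} ∪ Subtype.val ⁻¹' w.edgeSet := by
        rw [Set.insert_union, Set.singleton_union, Set.insert_eq_of_mem he']
        ext
        simp [e, Subtype.ext_iff]
      rw [hedges]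
      exact induce_union_connected
        (connected_induce_lineGraph'_pair (x := v) (by simp [e]) (by simp [e'])).preconnected
        (ih hnil).preconnected ⟨e', by simp, he'⟩

end SimpleGraph

theorem isMinor_lineGraph'_of_walks {ι W : Type*} {K : SimpleGraph W} {a b : ι → W}
    (w : ∀ i, K.Walk (a i) (b i)) (hnil : ∀ i, ¬(w i).Nil)
    (hdisj : Pairwise fun i j => Disjoint (w i).edgeSet (w j).edgeSet)
    (hmeet : Pairwise fun i j => ∃ x, x ∈ (w i).support ∧ x ∈ (w j).support) :
    IsMinor (⊤ : SimpleGraph ι) (lineGraph' K) := by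
  refine ⟨fun i => Subtype.val ⁻¹' (w i).edgeSet,
    fun i => (w i).connected_induce_lineGraph'_edgeSet (hnil i),
    fun i j hij => (hdisj hij).preimage _, fun i j hij => ?_⟩
  obtain ⟨x, hxi, hxj⟩ := hmeet hij
  obtain ⟨e, he, hxe⟩ := (Walk.mem_support_iff_exists_mem_edges_of_not_nil (hnil i)).1 hxi
  obtain ⟨e', he', hxe'⟩ := (Walk.mem_support_iff_exists_mem_edges_of_not_nil (hnil j)).1 hxj
  refine ⟨⟨e, (w i).edges_subset_edgeSet he⟩, he, ⟨e', (w j).edges_subset_edgeSet he'⟩, he',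
    lineGraph'_adj_of_mem ?_ hxe hxe'⟩
  intro hee'
  obtain rfl : e = e' := congrArg Subtype.val hee'
  exact Set.disjoint_left.1 (hdisj hij) he he'

namespace SimpleGraph

variable {V W : Type*} {H : SimpleGraph V} {K : SimpleGraph W} {f : V → W}
  (p : ∀ u v, H.Adj u v → K.Walk (f u) (f v))

def Walk.liftSubdiv : ∀ {u v : V}, H.Walk u v → K.Walk (f u) (f v)
  | _, _, .nil => .nil
  | _, _, .cons h w => (p _ _ h).append (liftSubdiv w)

variable {p}

lemma Walk.map_mem_support_liftSubdiv {u v x : V} {w : H.Walk u v} (hx : x ∈ w.support) :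
    f x ∈ (w.liftSubdiv p).support := by
  induction w with
  | nil =>
    rw [support_nil, List.mem_singleton] at hx
    simp [hx, liftSubdiv]
  | cons h w ih =>
    rw [support_cons, List.mem_cons] at hx
    rw [liftSubdiv, mem_support_append_iff]
    rcases hx with rfl | hx
    · exact Or.inl (start_mem_support _)
    · exact Or.inr (ih hx)

lemma Walk.exists_of_mem_edges_liftSubdiv {u v : V} {w : H.Walk u v} {e : Sym2 W}
    (he : e ∈ (w.liftSubdiv p).edges) :
    ∃ a b, ∃ h : H.Adj a b, s(a, b) ∈ w.edges ∧ e ∈ (p a b h).edges := by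
  induction w with
  | nil => simp [liftSubdiv] at he
  | cons h w ih =>
    rw [liftSubdiv, edges_append, List.mem_append] at he
    rcases he with he | he
    · exact ⟨_, _, h, by simp, he⟩
    · obtain ⟨a, b, h', hab, he⟩ := ih he
      exact ⟨a, b, h', by simp [hab], he⟩

lemma Walk.not_nil_liftSubdiv (hf : Injective f) {u v : V} {w : H.Walk u v} (hw : ¬w.Nil) :
    ¬(w.liftSubdiv p).Nil := by
  cases w with
  | nil => simp at hw
  | cons h w =>
    rw [liftSubdiv, nil_append_iff]
    exact fun hnil => h.ne (hf hnil.1.eq)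

end SimpleGraph

namespace IsSubdivEmbed

variable {V W : Type*} {H : SimpleGraph V} {K : SimpleGraph W} {f : V → W}
  {p : ∀ u v, H.Adj u v → K.Walk (f u) (f v)}

theorem disjoint_edgeSet (hemb : IsSubdivEmbed H K f p) {u v u' v' : V} (h : H.Adj u v)
    (h' : H.Adj u' v') (hne : s(u, v) ≠ s(u', v')) :
    Disjoint (p u v h).edgeSet (p u' v' h').edgeSet := by
  rw [Set.disjoint_left]
  rintro ⟨x, y⟩ he he'
  have hxy : x ≠ y := ((p u v h).adj_of_mem_edges he).ne
  have hends : ∀ z ∈ s(x, y), z ∈ s(f u, f v) ∧ z ∈ s(f u', f v') := fun z hz => by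
    simpa only [Sym2.mem_iff] using hemb.2.2.2.2 u v u' v' h h' hne z
      (Walk.mem_support_of_mem_edges he hz) (Walk.mem_support_of_mem_edges he' hz)
  apply hne
  refine Sym2.map.injective hemb.1 ?_
  rw [Sym2.map_mk, Sym2.map_mk,
    (Sym2.mem_and_mem_iff hxy).1 ⟨(hends x (by simp)).1, (hends y (by simp)).1⟩,
    (Sym2.mem_and_mem_iff hxy).1 ⟨(hends x (by simp)).2, (hends y (by simp)).2⟩]

theorem disjoint_edgeSet_liftSubdiv (hemb : IsSubdivEmbed H K f p) {a b a' b' : V}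
    {w : H.Walk a b} {w' : H.Walk a' b'} (hw : Disjoint w.edgeSet w'.edgeSet) :
    Disjoint (w.liftSubdiv p).edgeSet (w'.liftSubdiv p).edgeSet := by
  rw [Set.disjoint_left]
  intro e he he'
  obtain ⟨u, v, h, huv, he⟩ := Walk.exists_of_mem_edges_liftSubdiv he
  obtain ⟨u', v', h', huv', he'⟩ := Walk.exists_of_mem_edges_liftSubdiv he'
  have hne : s(u, v) ≠ s(u', v') := fun heq => Set.disjoint_left.1 hw huv (heq ▸ huv')
  exact Set.disjoint_left.1 (hemb.disjoint_edgeSet h h' hne) he he'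

theorem isMinor_lineGraph' (hemb : IsSubdivEmbed H K f p) {ι : Type*} {a b : ι → V}
    (w : ∀ i, H.Walk (a i) (b i)) (hnil : ∀ i, ¬(w i).Nil)
    (hdisj : Pairwise fun i j => Disjoint (w i).edgeSet (w j).edgeSet)
    (hmeet : Pairwise fun i j => ∃ x, x ∈ (w i).support ∧ x ∈ (w j).support) :
    IsMinor (⊤ : SimpleGraph ι) (lineGraph' K) :=
  isMinor_lineGraph'_of_walks (fun i => (w i).liftSubdiv p)
    (fun i => Walk.not_nil_liftSubdiv hemb.1 (hnil i))
    (fun _ _ hij => hemb.disjoint_edgeSet_liftSubdiv (hdisj hij))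
    fun _ _ hij =>
      let ⟨x, hxi, hxj⟩ := hmeet hij
      ⟨f x, Walk.map_mem_support_liftSubdiv hxi, Walk.map_mem_support_liftSubdiv hxj⟩

end IsSubdivEmbed

namespace SimpleGraph

variable {V : Type*} {G : SimpleGraph V} (g : ℕ → V)

def Walk.ofChain : ∀ n, (∀ k < n, G.Adj (g k) (g (k + 1))) → G.Walk (g 0) (g n)
  | 0, _ => .nil
  | n + 1, h => (ofChain n fun k hk => h k (by omega)).concat (h n (by omega))

variable {g}

lemma Walk.mem_support_ofChain {n k : ℕ} {h : ∀ k < n, G.Adj (g k) (g (k + 1))} (hk : k ≤ n) :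
    g k ∈ (ofChain g n h).support := by
  induction n with
  | zero => simp [Nat.le_zero.1 hk, ofChain]
  | succ n ih =>
    rw [ofChain, support_concat, List.mem_append, List.mem_singleton]
    rcases Nat.lt_or_eq_of_le hk with hk | rfl
    · exact Or.inl (ih (by omega))
    · exact Or.inr rfl

lemma Walk.exists_of_mem_edges_ofChain {n : ℕ} {h : ∀ k < n, G.Adj (g k) (g (k + 1))}
    {e : Sym2 V} (he : e ∈ (ofChain g n h).edges) : ∃ k < n, e = s(g k, g (k + 1)) := by
  induction n with
  | zero => simp [ofChain] at he
  | succ n ih =>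
    rw [ofChain, edges_concat, List.concat_eq_append, List.mem_append, List.mem_singleton] at he
    rcases he with he | rfl
    · obtain ⟨k, hk, rfl⟩ := ih he
      exact ⟨k, by omega, rfl⟩
    · exact ⟨n, by omega, rfl⟩

lemma Walk.not_nil_ofChain {n : ℕ} {h : ∀ k < n + 1, G.Adj (g k) (g (k + 1))} :
    ¬(ofChain g (n + 1) h).Nil := by
  rw [← length_eq_zero_iff, ofChain, length_concat]
  omega

end SimpleGraph

section Hooks

variable {t : ℕ}

def hookVertex (t r k : ℕ) : Fin (t + 2) × Fin (t + 2) :=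
  (Fin.ofNat (t + 2) (max k r), Fin.ofNat (t + 2) (min k r))

lemma hookVertex_comm (t r k : ℕ) : hookVertex t r k = hookVertex t k r := by
  simp only [hookVertex, max_comm, min_comm]

lemma hookVertex_val {r k : ℕ} (hr : r ≤ t + 1) (hk : k ≤ t + 1) :
    ((hookVertex t r k).1 : ℕ) = max k r ∧ ((hookVertex t r k).2 : ℕ) = min k r :=
  ⟨Nat.mod_eq_of_lt (by omega), Nat.mod_eq_of_lt (by omega)⟩

lemma crossedPre_adj_hookVertex {r k : ℕ} (hr : 1 ≤ r) (hrt : r ≤ t) (hk : k ≤ t) :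
    (crossedPre t).Adj (hookVertex t r k) (hookVertex t r (k + 1)) := by
  obtain ⟨h₁, h₂⟩ := hookVertex_val (t := t) (r := r) (k := k) (by omega) (by omega)
  obtain ⟨h₁', h₂'⟩ := hookVertex_val (t := t) (r := r) (k := k + 1) (by omega) (by omega)
  simp only [crossedPre, fromRel_adj, gridInterior, ne_eq, Prod.ext_iff,
    Fin.ext_iff, h₁, h₂, h₁', h₂']
  omega

def hookWalk (i : Fin t) :
    (crossedPre t).Walk (hookVertex t (i + 1) 0) (hookVertex t (i + 1) (t + 1)) :=
  Walk.ofChain (hookVertex t (i + 1)) (t + 1) fun _ hk =>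
    crossedPre_adj_hookVertex (Nat.le_add_left 1 i) i.isLt (by omega)

lemma disjoint_edgeSet_hookWalk {i j : Fin t} (hij : i ≠ j) :
    Disjoint (hookWalk i).edgeSet (hookWalk j).edgeSet := by
  rw [Set.disjoint_left]
  intro e he he'
  obtain ⟨k, hk, rfl⟩ := Walk.exists_of_mem_edges_ofChain he
  obtain ⟨k', hk', heq⟩ := Walk.exists_of_mem_edges_ofChain he'
  have hij' : (i : ℕ) ≠ j := Fin.val_ne_of_ne hij
  obtain ⟨a₁, a₂⟩ := hookVertex_val (t := t) (r := i + 1) (k := k) (by omega) (by omega)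
  obtain ⟨b₁, b₂⟩ := hookVertex_val (t := t) (r := i + 1) (k := k + 1) (by omega) (by omega)
  obtain ⟨c₁, c₂⟩ := hookVertex_val (t := t) (r := j + 1) (k := k') (by omega) (by omega)
  obtain ⟨d₁, d₂⟩ := hookVertex_val (t := t) (r := j + 1) (k := k' + 1) (by omega) (by omega)
  simp only [Sym2.eq_iff, Prod.ext_iff, Fin.ext_iff, a₁, a₂, b₁, b₂, c₁, c₂, d₁, d₂] at heq
  omega

lemma hookVertex_mem_support_hookWalk (i : Fin t) {k : ℕ} (hk : k ≤ t + 1) :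
    hookVertex t (i + 1) k ∈ (hookWalk i).support :=
  Walk.mem_support_ofChain hk

end Hooks

theorem IsSubdivEmbed.isMinor_lineGraph'_of_crossedPre {t n : ℕ} {K : SimpleGraph (Fin n)}
    {f : Fin (t + 2) × Fin (t + 2) → Fin n} {p : ∀ u v, (crossedPre t).Adj u v → K.Walk (f u) (f v)}
    (hemb : IsSubdivEmbed (crossedPre t) K f p) :
    IsMinor (⊤ : SimpleGraph (Fin t)) (lineGraph' K) :=
  hemb.isMinor_lineGraph' hookWalk (fun _ => Walk.not_nil_ofChain)
    (fun _ _ hij => disjoint_edgeSet_hookWalk hij) fun i j _ =>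
      ⟨hookVertex t (i + 1) (j + 1), hookVertex_mem_support_hookWalk i (by omega),
        hookVertex_comm t (j + 1) (i + 1) ▸ hookVertex_mem_support_hookWalk j (by omega)⟩

/-- Lemma 7.7: graphs containing a crossed `t`-grid have Hadwiger number
at least about `√t`. -/
theorem crossedGrid_hw_bound :
    ∃ c : ℕ, 1 ≤ c ∧
      ∀ (t : ℕ), 1 ≤ t →
      ∀ (V : Type) [Finite V] (G : SimpleGraph V),
        ContainsCrossedGrid t G → t ≤ c * (hw G) ^ 2 := by
  refine ⟨1, le_rfl, fun t _ V _ G hG => ?_⟩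
  obtain ⟨n, K, f, p, hemb, -, -, -, φ, hφ, hφadj⟩ := hG
  have hminor : IsMinor (⊤ : SimpleGraph (Fin t)) G :=
    hemb.isMinor_lineGraph'_of_crossedPre.map ⟨φ, hφadj _ _⟩ hφ
  calc t ≤ hw G := le_hw hminor
    _ ≤ hw G ^ 2 := Nat.le_self_pow two_ne_zero _
    _ = 1 * hw G ^ 2 := (one_mul _).symm
end
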